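/- If the sequence ξ = (ξ₁, ξ₂, …) is stationary, ∫_E ψ d(ℙ∘ξ₁^{-1}) < ∞, and additionally ξ is ergodic (i.e. ℙ{ξ ∈ I} ∈ {0,1} for every I in the shift-invariant σ-algebra ℐ), then ℙ-almost surely the empirical measures m_n converge to μ = ℙ∘ξ₁^{-1} in the ψ-weak topology, as n → ∞. -/

import Mathlib

/-!
Birkhoff's pointwise ergodic theorem for the shift (via Garsia's proof of the maximal inequality),
applied to functions of the first coordinate, gives almost surely `∫ ψ dm_n → ∫ ψ dμ` and
`m_n(B) → μ(B)` for each fixed Borel set `B`. Countably many sets control the Prohorov distance: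
for `δ = 1/(k+1)`, cover `E` up to `μ`-mass `δ` by finitely many disjointed `δ`-balls around a
dense sequence. A set `B` is covered by the cells meeting it, which lie in its `2δ`-thickening, and
the remainder, so convergence on the cells and the remainder gives `π(m_n, μ) ≤ 2δ` eventually.
-/

open MeasureTheory Filter Topology
open scoped ENNReal NNReal

/-- The empirical measure `m_{n+1}(ω) = (n+1)⁻¹ ∑_{i=0}^{n} δ_{ω i}` of the first `n+1`
observations (coordinates) of the sequence `ω : ℕ → E`. -/
noncomputable def empMeasure (E : Type*) [MeasurableSpace E] (n : ℕ) (ω : ℕ → E) :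
    MeasureTheory.Measure E :=
  ((n : ℝ≥0∞) + 1)⁻¹ • ∑ i ∈ Finset.range (n + 1), MeasureTheory.Measure.dirac (ω i)

/-- The empirical measure as a probability measure. -/
noncomputable def empirical (E : Type*) [MeasurableSpace E] (n : ℕ) (ω : ℕ → E) :
    MeasureTheory.ProbabilityMeasure E :=
  ⟨empMeasure E n ω, by
    constructor
    simp [empMeasure, Measure.smul_apply, Finset.sum_apply]
    rw [ENNReal.inv_mul_cancel] <;> simp⟩

/-- The shift operator `Σ(x₁,x₂,…) = (x₂,x₃,…)` on `E^ℕ`. -/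
def shift {E : Type*} (ω : ℕ → E) : ℕ → E := fun n => ω (n + 1)

/-- The shift-invariant σ-algebra `ℐ = {I ∈ ℰ^ℕ : Σ⁻¹(I) = I}` on `E^ℕ` (identified, via the
coordinate process `ξ`, with `ξ⁻¹ℐ`). -/
def shiftInvariantSigma (E : Type*) [MeasurableSpace E] : MeasurableSpace (ℕ → E) where
  MeasurableSet' I := MeasurableSet I ∧ shift ⁻¹' I = I
  measurableSet_empty := ⟨MeasurableSet.empty, by simp⟩
  measurableSet_compl := fun s hs => ⟨hs.1.compl, by rw [Set.preimage_compl, hs.2]⟩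
  measurableSet_iUnion := fun s hs =>
    ⟨MeasurableSet.iUnion fun i => (hs i).1, by simp [Set.preimage_iUnion, fun i => (hs i).2]⟩

/-- The one-sided Prohorov distance
`π(μ,ν) = inf {ε > 0 : μ(B) ≤ ν(Bᵉ) + ε for every Borel set B}`. -/
noncomputable def prohorovDist {E : Type*} [PseudoMetricSpace E] [MeasurableSpace E]
    (μ ν : MeasureTheory.Measure E) : ℝ :=
  sInf {ε : ℝ | 0 < ε ∧ ∀ B : Set E, MeasurableSet B →
    μ B ≤ ν (Metric.thickening ε B) + ENNReal.ofReal ε}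

/-- The distance `d_ψ(μ,ν) = π(μ,ν) + |∫ψ dμ − ∫ψ dν|`. -/
noncomputable def dPsi {E : Type*} [PseudoMetricSpace E] [MeasurableSpace E] (ψ : E → ℝ)
    (μ ν : MeasureTheory.Measure E) : ℝ :=
  prohorovDist μ ν + |(∫ x, ψ x ∂μ) - ∫ x, ψ x ∂ν|

open Set Metric

lemma PreErgodic.of_prob_eq_zero_or_one {α : Type*} [MeasurableSpace α] {T : α → α}
    {μ : Measure α} [IsProbabilityMeasure μ]
    (h : ∀ s, MeasurableSet s → T ⁻¹' s = s → μ s = 0 ∨ μ s = 1) : PreErgodic T μ where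
  aeconst_set s hs hinv := eventuallyConst_set'.2 <| (h s hs hinv).imp ae_eq_empty.2
    fun h1 => ae_eq_univ.2 ((prob_compl_eq_zero_iff hs).2 h1)

section Birkhoff

variable {α : Type*} {T : α → α} {f : α → ℝ}

/-- `birkhoffMax T f N x = max {birkhoffSum T f n x | 1 ≤ n ≤ N + 1}`. -/
noncomputable def birkhoffMax (T : α → α) (f : α → ℝ) : ℕ → α → ℝ
  | 0 => f
  | N + 1 => fun x => f x + max 0 (birkhoffMax T f N (T x))

lemma birkhoffMax_le_succ (N : ℕ) (x : α) : birkhoffMax T f N x ≤ birkhoffMax T f (N + 1) x := by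
  induction N generalizing x with
  | zero => exact le_add_of_nonneg_right (le_max_left _ _)
  | succ N ih => exact add_le_add_right (max_le_max le_rfl (ih (T x))) _

lemma birkhoffSum_succ_le_birkhoffMax (N : ℕ) (x : α) :
    birkhoffSum T f (N + 1) x ≤ birkhoffMax T f N x := by
  induction N generalizing x with
  | zero => simp [birkhoffMax, birkhoffSum_one]
  | succ N ih =>
    rw [birkhoffSum_succ']
    exact add_le_add_right ((ih (T x)).trans (le_max_right 0 _)) _

lemma exists_birkhoffMax_le_birkhoffSum (N : ℕ) (x : α) :
    ∃ n, birkhoffMax T f N x ≤ birkhoffSum T f n x := by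
  induction N generalizing x with
  | zero => exact ⟨1, by simp [birkhoffMax, birkhoffSum_one]⟩
  | succ N ih =>
    rcases le_total (birkhoffMax T f N (T x)) 0 with h | h
    · exact ⟨1, by simp [birkhoffMax, birkhoffSum_one, max_eq_left h]⟩
    · obtain ⟨n, hn⟩ := ih (T x)
      refine ⟨n + 1, ?_⟩
      rw [birkhoffSum_succ']
      simpa only [birkhoffMax, max_eq_right h] using add_le_add_right hn _

lemma setOf_exists_birkhoffSum_pos :
    {x | ∃ n, 0 < birkhoffSum T f n x} = ⋃ N, {x | 0 < birkhoffMax T f N x} := by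
  ext x
  simp only [mem_iUnion]
  constructor
  · rintro ⟨_ | n, hn⟩
    · simp at hn
    · exact ⟨n, hn.trans_le (birkhoffSum_succ_le_birkhoffMax n x)⟩
  · rintro ⟨N, hN⟩
    obtain ⟨n, hn⟩ := exists_birkhoffMax_le_birkhoffSum N x
    exact ⟨n, hN.trans_le hn⟩

variable [MeasurableSpace α] {μ : Measure α}

lemma measurable_birkhoffSum (hT : Measurable T) (hf : Measurable f) (n : ℕ) :
    Measurable (birkhoffSum T f n) :=
  Finset.measurable_sum _ fun i _ => hf.comp (hT.iterate i)

lemma measurable_birkhoffMax (hT : Measurable T) (hf : Measurable f) (N : ℕ) :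
    Measurable (birkhoffMax T f N) := by
  induction N with
  | zero => exact hf
  | succ N ih => exact hf.add (measurable_const.max (ih.comp hT))

lemma integrable_birkhoffMax (hT : MeasurePreserving T μ μ) (hf : Integrable f μ) (N : ℕ) :
    Integrable (birkhoffMax T f N) μ := by
  induction N with
  | zero => exact hf
  | succ N ih =>
    exact hf.add ((integrable_zero _ _ μ).sup (hT.integrable_comp_of_integrable ih))

/-- Garsia: with `P = max 0 (birkhoffMax T f N)`, one has `P - P ∘ T ≤ f` on the set `s` where
`birkhoffMax T f N > 0`, and `∫_s (P - P ∘ T) ≥ ∫ P - ∫ P ∘ T = 0` since `P ≥ 0` vanishes off `s`. -/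
lemma setIntegral_birkhoffMax_pos_nonneg (hT : MeasurePreserving T μ μ) (hf : Measurable f)
    (hfi : Integrable f μ) (N : ℕ) :
    0 ≤ ∫ x in {x | 0 < birkhoffMax T f N x}, f x ∂μ := by
  set s := {x | 0 < birkhoffMax T f N x}
  set P : α → ℝ := fun x => max 0 (birkhoffMax T f N x)
  have hPm : Measurable P := measurable_const.max (measurable_birkhoffMax hT.measurable hf N)
  have hPi : Integrable P μ := (integrable_zero _ _ μ).sup (integrable_birkhoffMax hT hfi N)
  have hPTi : Integrable (fun x => P (T x)) μ := hT.integrable_comp_of_integrable hPi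
  have hs : MeasurableSet s :=
    measurableSet_lt measurable_const (measurable_birkhoffMax hT.measurable hf N)
  have hle : ∀ x ∈ s, P x - P (T x) ≤ f x := fun x hx => by
    have := birkhoffMax_le_succ (T := T) (f := f) N x
    simp only [birkhoffMax, P, max_eq_right (le_of_lt (show 0 < birkhoffMax T f N x from hx))]
      at this ⊢
    linarith
  have hP_on : ∫ x in s, P x ∂μ = ∫ x, P x ∂μ :=
    setIntegral_eq_integral_of_forall_compl_eq_zero fun x hx => max_eq_left (not_lt.1 hx)
  have hPT_on : ∫ x in s, P (T x) ∂μ ≤ ∫ x, P (T x) ∂μ :=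
    setIntegral_le_integral hPTi (Eventually.of_forall fun x => le_max_left 0 _)
  have hPT : ∫ x, P (T x) ∂μ = ∫ x, P x ∂μ := by
    rw [← integral_map hT.measurable.aemeasurable hPm.aestronglyMeasurable, hT.map_eq]
  calc 0 ≤ ∫ x in s, (P x - P (T x)) ∂μ := by
        rw [integral_sub hPi.integrableOn hPTi.integrableOn]
        linarith
    _ ≤ ∫ x in s, f x ∂μ := setIntegral_mono_on (hPi.sub hPTi).integrableOn hfi.integrableOn hs hle

theorem setIntegral_exists_birkhoffSum_pos_nonneg (hT : MeasurePreserving T μ μ)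
    (hf : Measurable f) (hfi : Integrable f μ) :
    0 ≤ ∫ x in {x | ∃ n, 0 < birkhoffSum T f n x}, f x ∂μ := by
  have hmono : Monotone fun N => {x | 0 < birkhoffMax T f N x} :=
    monotone_nat_of_le_succ fun N x hx => lt_of_lt_of_le hx (birkhoffMax_le_succ N x)
  have hmeas : ∀ N, MeasurableSet {x | 0 < birkhoffMax T f N x} := fun N =>
    measurableSet_lt measurable_const (measurable_birkhoffMax hT.measurable hf N)
  rw [setOf_exists_birkhoffSum_pos]
  exact ge_of_tendsto' (tendsto_setIntegral_of_monotone hmeas hmono hfi.integrableOn)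
    (setIntegral_birkhoffMax_pos_nonneg hT hf hfi)

omit [MeasurableSpace α] in
lemma bddAbove_birkhoffSum_apply_iff (x : α) :
    BddAbove (range fun n => birkhoffSum T f n (T x)) ↔
      BddAbove (range fun n => birkhoffSum T f n x) := by
  simp only [bddAbove_def, forall_mem_range]
  constructor
  · rintro ⟨C, hC⟩
    refine ⟨max 0 (f x + C), fun n => ?_⟩
    rcases n with _ | n
    · simp
    · rw [birkhoffSum_succ']
      exact le_max_of_le_right (add_le_add_right (hC n) _)
  · rintro ⟨C, hC⟩
    refine ⟨C - f x, fun n => ?_⟩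
    have := hC (n + 1)
    rw [birkhoffSum_succ'] at this
    linarith

/-- The set where the Birkhoff sums are unbounded above is invariant, so under ergodicity it is
null or conull; in the conull case the maximal ergodic theorem forces `0 ≤ ∫ f`. -/
lemma ae_bddAbove_birkhoffSum (hT : Ergodic T μ) (hf : Measurable f) (hfi : Integrable f μ)
    (hneg : ∫ x, f x ∂μ < 0) :
    ∀ᵐ x ∂μ, BddAbove (range fun n => birkhoffSum T f n x) := by
  set A := {x | BddAbove (range fun n => birkhoffSum T f n x)}
  have hA : MeasurableSet A :=
    measurableSet_bddAbove_range (measurable_birkhoffSum hT.measurable hf)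
  have hAinv : T ⁻¹' A = A := ext fun x => bddAbove_birkhoffSum_apply_iff x
  refine (hT.ae_mem_or_ae_notMem hA hAinv).resolve_right fun hAc => hneg.not_ge ?_
  have hfull : μ.restrict {x | ∃ n, 0 < birkhoffSum T f n x} = μ := by
    refine Measure.restrict_eq_self_of_ae_mem (hAc.mono fun x hx => ?_)
    obtain ⟨_, ⟨n, rfl⟩, hn⟩ := not_bddAbove_iff.1 hx 0
    exact ⟨n, hn⟩
  simpa [hfull] using setIntegral_exists_birkhoffSum_pos_nonneg hT.toMeasurePreserving hf hfi

lemma ae_eventually_birkhoffAverage_lt [IsProbabilityMeasure μ] (hT : Ergodic T μ)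
    (hf : Measurable f) (hfi : Integrable f μ) {b : ℝ} (hb : ∫ x, f x ∂μ < b) :
    ∀ᵐ x ∂μ, ∀ᶠ n in atTop, birkhoffAverage ℝ T f n x < b := by
  obtain ⟨a, hfa, hab⟩ := exists_between hb
  have hg : ∫ x, (f x - a) ∂μ < 0 := by
    rw [integral_sub hfi (integrable_const a), integral_const, probReal_univ, one_smul]
    linarith
  filter_upwards [ae_bddAbove_birkhoffSum hT (hf.sub_const a) (hfi.sub (integrable_const a)) hg]
    with x ⟨C, hC⟩
  have hC' : ∀ n, birkhoffSum T f n x ≤ C + n * a := fun n => by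
    have := hC (mem_range_self n)
    simp only [birkhoffSum, Finset.sum_sub_distrib, Finset.sum_const, Finset.card_range,
      nsmul_eq_mul] at this
    simp only [birkhoffSum]
    linarith
  have hsmall : ∀ᶠ n : ℕ in atTop, C / n < b - a :=
    (tendsto_const_div_atTop_nhds_zero_nat C).eventually_lt_const (by linarith)
  filter_upwards [hsmall, eventually_gt_atTop 0] with n hn hn0
  have hn0' : (0 : ℝ) < n := Nat.cast_pos.2 hn0
  calc birkhoffAverage ℝ T f n x = birkhoffSum T f n x / n := by
        rw [birkhoffAverage, smul_eq_mul, inv_mul_eq_div]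
    _ ≤ (C + n * a) / n := div_le_div_of_nonneg_right (hC' n) hn0'.le
    _ = C / n + a := by field_simp
    _ < b := by linarith

theorem ae_tendsto_birkhoffAverage [IsProbabilityMeasure μ] (hT : Ergodic T μ)
    (hf : Measurable f) (hfi : Integrable f μ) :
    ∀ᵐ x ∂μ, Tendsto (fun n => birkhoffAverage ℝ T f n x) atTop (𝓝 (∫ x, f x ∂μ)) := by
  set c := ∫ x, f x ∂μ
  have hupper : ∀ k : ℕ, ∀ᵐ x ∂μ, ∀ᶠ n in atTop, birkhoffAverage ℝ T f n x < c + 1 / (k + 1) :=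
    fun k => ae_eventually_birkhoffAverage_lt hT hf hfi (lt_add_of_pos_right _ (by positivity))
  have hlower : ∀ k : ℕ, ∀ᵐ x ∂μ, ∀ᶠ n in atTop,
      birkhoffAverage ℝ T (-f) n x < -c + 1 / (k + 1) :=
    fun k => ae_eventually_birkhoffAverage_lt hT hf.neg hfi.neg
      (by simpa only [Pi.neg_apply, integral_neg] using lt_add_of_pos_right (-c) (by positivity))
  filter_upwards [ae_all_iff.2 hupper, ae_all_iff.2 hlower] with x hxu hxl
  refine tendsto_order.2 ⟨fun a ha => ?_, fun b hb => ?_⟩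
  · obtain ⟨k, hk⟩ := exists_nat_one_div_lt (sub_pos.2 ha)
    filter_upwards [hxl k] with n hn
    simp only [birkhoffAverage_neg, Pi.neg_apply] at hn
    linarith
  · obtain ⟨k, hk⟩ := exists_nat_one_div_lt (sub_pos.2 hb)
    filter_upwards [hxu k] with n hn
    linarith

end Birkhoff

section Prohorov

variable {E : Type*} [MeasurableSpace E]

protected lemma MeasurableSet.partialSups {f : ℕ → Set E} (hf : ∀ j, MeasurableSet (f j))
    (m : ℕ) : MeasurableSet (partialSups f m) := by
  rw [partialSups_eq_biUnion_range]
  exact Finset.measurableSet_biUnion _ fun j _ => hf j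

lemma exists_measure_compl_partialSups_lt (μ : Measure E) [IsFiniteMeasure μ] {f : ℕ → Set E}
    (hfm : ∀ j, MeasurableSet (f j)) (hf : ⋃ j, f j = univ) {η : ℝ≥0∞} (hη : 0 < η) :
    ∃ m, μ (partialSups f m)ᶜ < η := by
  have hempty : ⋂ m, (partialSups f m)ᶜ = ∅ := by
    rw [← compl_iUnion, compl_empty_iff, ← iSup_eq_iUnion, iSup_partialSups_eq, iSup_eq_iUnion,
      hf]
  have htend := tendsto_measure_iInter_atTop (μ := μ) (s := fun m => (partialSups f m)ᶜ)
    (fun m => (MeasurableSet.partialSups hfm m).compl.nullMeasurableSet)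
    (fun _ _ h => compl_subset_compl.2 ((partialSups f).monotone h)) ⟨0, measure_ne_top μ _⟩
  rw [hempty, measure_empty] at htend
  exact (htend.eventually_lt_const hη).exists

variable [PseudoMetricSpace E]

lemma prohorovDist_nonneg (μ ν : Measure E) : 0 ≤ prohorovDist μ ν :=
  Real.sInf_nonneg fun _ hε => hε.1.le

lemma prohorovDist_le {μ ν : Measure E} {ε : ℝ} (hε : 0 < ε)
    (h : ∀ B, MeasurableSet B → μ B ≤ ν (thickening ε B) + ENNReal.ofReal ε) :
    prohorovDist μ ν ≤ ε :=
  csInf_le ⟨0, fun _ hε => hε.1.le⟩ ⟨hε, h⟩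

variable {f : ℕ → Set E} {c : ℕ → E} {δ : ℝ}

lemma measure_le_thickening_add (hfm : ∀ j, MeasurableSet (f j)) (hf : ∀ j, f j ⊆ ball (c j) δ)
    {μ ν : Measure E} {m : ℕ} {η : ℝ≥0∞}
    (hν : ∀ j ≤ m, ν (disjointed f j) ≤ μ (disjointed f j) + η) (B : Set E) :
    ν B ≤ μ (thickening (2 * δ) B) + (m + 1) * η + ν (partialSups f m)ᶜ := by
  classical
  set S := (Finset.Iic m).filter fun j => (disjointed f j ∩ B).Nonempty
  have hcover : B ⊆ (⋃ j ∈ S, disjointed f j) ∪ (partialSups f m)ᶜ := by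
    intro y hy
    by_cases hyR : y ∈ partialSups f m
    · rw [← biUnion_Iic_disjointed, mem_iUnion₂] at hyR
      obtain ⟨j, hj, hyj⟩ := hyR
      exact Or.inl (mem_biUnion (Finset.mem_filter.2 ⟨hj, y, hyj, hy⟩) hyj)
    · exact Or.inr hyR
  have hthick : ⋃ j ∈ S, disjointed f j ⊆ thickening (2 * δ) B := by
    refine iUnion₂_subset fun j hj y hy => ?_
    obtain ⟨z, hzj, hzB⟩ := (Finset.mem_filter.1 hj).2
    have hy' := mem_ball.1 (hf j (disjointed_subset f j hy))
    have hz' := mem_ball.1 (hf j (disjointed_subset f j hzj))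
    exact mem_thickening_iff.2 ⟨z, hzB, (dist_triangle_right y z (c j)).trans_lt (by linarith)⟩
  have hcard : (S.card : ℝ≥0∞) ≤ m + 1 := by
    exact_mod_cast (Finset.card_filter_le _ _).trans (Nat.card_Iic m).le
  calc ν B ≤ ν (⋃ j ∈ S, disjointed f j) + ν (partialSups f m)ᶜ :=
        (measure_mono hcover).trans (measure_union_le _ _)
    _ ≤ ∑ j ∈ S, (μ (disjointed f j) + η) + ν (partialSups f m)ᶜ := by
        gcongr
        exact (measure_biUnion_finset_le _ _).trans
          (Finset.sum_le_sum fun j hj => hν j (Finset.mem_Iic.1 (Finset.mem_filter.1 hj).1))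
    _ = μ (⋃ j ∈ S, disjointed f j) + S.card * η + ν (partialSups f m)ᶜ := by
        rw [Finset.sum_add_distrib, Finset.sum_const, nsmul_eq_mul,
          measure_biUnion_finset ((disjoint_disjointed f).set_pairwise _)
            fun j _ => MeasurableSet.disjointed hfm j]
    _ ≤ μ (thickening (2 * δ) B) + (m + 1) * η + ν (partialSups f m)ᶜ := by
        gcongr

lemma eventually_prohorovDist_le (hfm : ∀ j, MeasurableSet (f j)) (hf : ∀ j, f j ⊆ ball (c j) δ)
    (hδ : 0 < δ) {μ : Measure E} [IsFiniteMeasure μ] {ν : ℕ → Measure E} {m : ℕ}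
    (hR : μ (partialSups f m)ᶜ < ENNReal.ofReal δ)
    (hνD : ∀ j ≤ m, Tendsto (fun n => ν n (disjointed f j)) atTop (𝓝 (μ (disjointed f j))))
    (hνR : Tendsto (fun n => ν n (partialSups f m)ᶜ) atTop (𝓝 (μ (partialSups f m)ᶜ))) :
    ∀ᶠ n in atTop, prohorovDist (ν n) μ ≤ 2 * δ := by
  set η := ENNReal.ofReal δ / (m + 1)
  have hη : η ≠ 0 := (ENNReal.div_pos (by simpa using hδ) (by simp)).ne'
  have hD : ∀ᶠ n in atTop, ∀ j ∈ Finset.Iic m, ν n (disjointed f j) ≤ μ (disjointed f j) + η :=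
    (Finset.Iic m).eventually_all.2 fun j hj => (hνD j (Finset.mem_Iic.1 hj)).eventually_le_const
      (ENNReal.lt_add_right (measure_ne_top _ _) hη)
  filter_upwards [hD, hνR.eventually_le_const hR] with n hnD hnR
  refine prohorovDist_le (by positivity) fun B _ => ?_
  calc ν n B ≤ μ (thickening (2 * δ) B) + (m + 1) * η + ENNReal.ofReal δ :=
        (measure_le_thickening_add hfm hf (fun j hj => hnD j (Finset.mem_Iic.2 hj)) B).trans
          (by gcongr)
    _ = μ (thickening (2 * δ) B) + ENNReal.ofReal (2 * δ) := by
        rw [ENNReal.mul_div_cancel (by simp) (by simp), add_assoc, two_mul,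
          ENNReal.ofReal_add hδ.le hδ.le]

theorem exists_countable_forall_tendsto_prohorovDist [OpensMeasurableSpace E]
    [TopologicalSpace.SeparableSpace E] [Nonempty E] (μ : Measure E) [IsFiniteMeasure μ] :
    ∃ 𝒮 : Set (Set E), 𝒮.Countable ∧ (∀ B ∈ 𝒮, MeasurableSet B) ∧
      ∀ ν : ℕ → Measure E, (∀ B ∈ 𝒮, Tendsto (fun n => ν n B) atTop (𝓝 (μ B))) →
        Tendsto (fun n => prohorovDist (ν n) μ) atTop (𝓝 0) := by
  obtain ⟨c, hc⟩ := TopologicalSpace.exists_dense_seq E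
  set δ : ℕ → ℝ := fun k => 1 / (k + 1)
  have hδ : ∀ k, 0 < δ k := fun k => by positivity
  set balls : ℕ → ℕ → Set E := fun k j => ball (c j) (δ k)
  have hballs : ∀ k j, MeasurableSet (balls k j) := fun _ _ => measurableSet_ball
  have hcover : ∀ k, ⋃ j, balls k j = univ := fun k => eq_univ_of_forall fun y =>
    mem_iUnion.2 ((hc.exists_dist_lt y (hδ k)).imp fun _ => mem_ball.2)
  choose m hm using fun k => exists_measure_compl_partialSups_lt μ (hballs k) (hcover k)
    (ENNReal.ofReal_pos.2 (hδ k))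
  refine ⟨range (fun p : ℕ × ℕ => disjointed (balls p.1) p.2) ∪
      range (fun k => (partialSups (balls k) (m k))ᶜ),
    (countable_range _).union (countable_range _), ?_, fun ν hν => ?_⟩
  · rintro B (⟨p, rfl⟩ | ⟨k, rfl⟩)
    exacts [MeasurableSet.disjointed (hballs _) _, (MeasurableSet.partialSups (hballs k) _).compl]
  refine tendsto_order.2 ⟨fun a ha => Eventually.of_forall fun n =>
    ha.trans_le (prohorovDist_nonneg _ _), fun r hr => ?_⟩
  obtain ⟨k, hk⟩ := exists_nat_one_div_lt (half_pos hr)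
  filter_upwards [eventually_prohorovDist_le (hballs k) (fun _ => subset_rfl) (hδ k) (hm k)
    (fun j _ => hν _ (Or.inl ⟨(k, j), rfl⟩)) (hν _ (Or.inr ⟨k, rfl⟩))] with n hn
  linarith

end Prohorov

section CoordinateProcess

variable {E : Type*}

lemma shift_iterate_apply (i k : ℕ) (ω : ℕ → E) : shift^[i] ω k = ω (k + i) := by
  induction i generalizing k ω with
  | zero => rfl
  | succ i ih => rw [Function.iterate_succ_apply, ih]; rfl

variable [MeasurableSpace E]

instance (n : ℕ) (ω : ℕ → E) : IsProbabilityMeasure (empMeasure E n ω) := (empirical E n ω).2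

lemma measurable_shift : Measurable (shift (E := E)) :=
  measurable_pi_lambda _ fun n => measurable_pi_apply (n + 1)

lemma integral_empMeasure [MeasurableSingletonClass E] (g : E → ℝ) (n : ℕ) (ω : ℕ → E) :
    ∫ x, g x ∂(empMeasure E n ω) = birkhoffAverage ℝ shift (fun ω' => g (ω' 0)) (n + 1) ω := by
  rw [empMeasure, integral_smul_measure,
    integral_finsetSum_measure fun i _ => integrable_dirac enorm_lt_top]
  simp only [integral_dirac, birkhoffAverage, birkhoffSum, shift_iterate_apply, zero_add,
    smul_eq_mul, ENNReal.toReal_inv]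
  norm_cast

variable (ℙ : Measure (ℕ → E)) [IsProbabilityMeasure ℙ]

theorem ae_tendsto_integral_empMeasure [MeasurableSingletonClass E] (hℙ : Ergodic shift ℙ)
    {g : E → ℝ} (hg : Measurable g) (hgi : Integrable g (ℙ.map fun ω => ω 0)) :
    ∀ᵐ ω ∂ℙ, Tendsto (fun n => ∫ x, g x ∂(empMeasure E n ω)) atTop
      (𝓝 (∫ x, g x ∂(ℙ.map fun ω => ω 0))) := by
  have h0 : Measurable fun ω : ℕ → E => ω 0 := measurable_pi_apply 0
  have hgm : Measurable fun ω : ℕ → E => g (ω 0) := hg.comp h0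
  have hgi' : Integrable (fun ω : ℕ → E => g (ω 0)) ℙ :=
    (integrable_map_measure hg.aestronglyMeasurable h0.aemeasurable).1 hgi
  have hbirk := ae_tendsto_birkhoffAverage hℙ hgm hgi'
  rw [← integral_map h0.aemeasurable hg.aestronglyMeasurable] at hbirk
  filter_upwards [hbirk] with ω hω
  simpa only [integral_empMeasure] using (tendsto_add_atTop_iff_nat 1).2 hω

theorem ae_tendsto_empMeasure_apply [MeasurableSingletonClass E] (hℙ : Ergodic shift ℙ)
    {B : Set E} (hB : MeasurableSet B) :
    ∀ᵐ ω ∂ℙ, Tendsto (fun n => empMeasure E n ω B) atTop (𝓝 (ℙ.map (fun ω => ω 0) B)) := by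
  filter_upwards [ae_tendsto_integral_empMeasure ℙ hℙ (g := B.indicator 1)
    (measurable_const.indicator hB) ((integrable_const 1).indicator hB)] with ω hω
  simp_rw [integral_indicator_one hB] at hω
  simpa [measureReal_def] using ENNReal.tendsto_ofReal hω

end CoordinateProcess

theorem empirical_tendsto_psiWeak_of_ergodic_general (E : Type*) [MetricSpace E] [PolishSpace E]
    [MeasurableSpace E] [BorelSpace E]
    (ψ : E → ℝ) (hψc : Continuous ψ)
    (ℙ : Measure (ℕ → E)) [IsProbabilityMeasure ℙ]
    (hstat : ℙ.map shift = ℙ)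
    (hint : Integrable ψ (ℙ.map fun ω => ω 0))
    (hergodic : ∀ I : Set (ℕ → E), MeasurableSet[shiftInvariantSigma E] I →
      ℙ I = 0 ∨ ℙ I = 1) :
    ∀ᵐ ω ∂ℙ, Filter.Tendsto (fun n => dPsi ψ (empMeasure E n ω) (ℙ.map fun ω' => ω' 0))
      Filter.atTop (nhds 0) := by
  set μ := ℙ.map fun ω' => ω' 0 with hμ
  have hℙ : Ergodic shift ℙ := ⟨⟨measurable_shift, hstat⟩,
    PreErgodic.of_prob_eq_zero_or_one fun s hs hinv => hergodic s ⟨hs, hinv⟩⟩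
  have : IsProbabilityMeasure μ :=
    Measure.isProbabilityMeasure_map (measurable_pi_apply 0).aemeasurable
  have : Nonempty E := nonempty_of_isProbabilityMeasure μ
  obtain ⟨𝒮, h𝒮c, h𝒮m, h𝒮⟩ := exists_countable_forall_tendsto_prohorovDist μ
  have hsets : ∀ᵐ ω ∂ℙ, ∀ B ∈ 𝒮, Tendsto (fun n => empMeasure E n ω B) atTop (𝓝 (μ B)) :=
    (ae_ball_iff h𝒮c).2 fun B hB => ae_tendsto_empMeasure_apply ℙ hℙ (h𝒮m B hB)
  filter_upwards [hsets, ae_tendsto_integral_empMeasure ℙ hℙ hψc.measurable hint] with ω hω hωψ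
  simpa [dPsi, hμ] using (h𝒮 _ hω).add (hωψ.sub_const (∫ x, ψ x ∂μ)).abs

/-- If the coordinate sequence `ξ = (ξ₁, ξ₂, …)` on `Ω = E^ℕ` is stationary, the law of `ξ₁`
integrates the gauge `ψ`, and `ξ` is ergodic (every shift-invariant set has probability `0`
or `1`), then `ℙ`-almost surely the empirical measures `m_n` converge to `μ = ℙ∘ξ₁⁻¹` in the
`ψ`-weak topology (equivalently, `d_ψ(m_n, μ) → 0`), as `n → ∞`. -/
theorem empirical_tendsto_psiWeak_of_ergodic (E : Type*) [MetricSpace E] [PolishSpace E]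
    [MeasurableSpace E] [BorelSpace E]
    (ψ : E → ℝ) (hψc : Continuous ψ) (hψ1 : ∀ x, 1 ≤ ψ x)
    (ℙ : Measure (ℕ → E)) [IsProbabilityMeasure ℙ]
    (hstat : ℙ.map shift = ℙ)
    (hint : Integrable ψ (ℙ.map fun ω => ω 0))
    (hergodic : ∀ I : Set (ℕ → E), MeasurableSet[shiftInvariantSigma E] I →
      ℙ I = 0 ∨ ℙ I = 1) :
    ∀ᵐ ω ∂ℙ, Filter.Tendsto (fun n => dPsi ψ (empMeasure E n ω) (ℙ.map fun ω' => ω' 0))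
      Filter.atTop (nhds 0) :=
  empirical_tendsto_psiWeak_of_ergodic_general E ψ hψc ℙ hstat hint hergodic
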